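/- arXiv:2409.02944 — 4 statements merged into one kernel-verified Lean document; each statement's English description precedes it below -/
import Mathlib

section
/- For f : [a,∞) → ℝ, a point t₀ ∈ (a,∞), and α ∈ (0,1), the conformable derivative T_a^α f(t₀) exists if and only if f has a first derivative at t₀, and in that case T_a^α f(t₀) = (t₀−a)^{1−α} f'(t₀). -/
open Filter Topology Set

/-- The conformable (left-sided) derivative of order `α` with lower terminal `a`:
`f` has conformable derivative `L` at `t` if the difference quotient
`(f (t + θ*(t-a)^(1-α)) - f t)/θ` tends to `L` as `θ → 0`. -/
def HasConfDerivAt (a α : ℝ) (f : ℝ → ℝ) (t L : ℝ) : Prop :=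
  Tendsto (fun θ : ℝ => (f (t + θ * (t - a) ^ (1 - α)) - f t) / θ) (𝓝[≠] (0:ℝ)) (𝓝 L)

/-- The conformable integral of order `α` with lower terminal `a`. -/
noncomputable def confInt (a α : ℝ) (f : ℝ → ℝ) (t : ℝ) : ℝ :=
  ∫ s in a..t, (s - a) ^ (α - 1) * f s

/-
With `c = (t₀ - a)^(1-α) > 0`, the conformable difference quotient at `θ` is `c` times the
ordinary difference quotient of `f` at `t₀` with increment `θ * c`, and `θ ↦ θ * c` maps the
punctured neighbourhoods of `0` onto themselves. So `T_a^α f(t₀) = c * f'(t₀)`, whichever exists.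
-/

theorem map_mul_right_nhdsNE_zero {G₀ : Type*} [GroupWithZero G₀] [TopologicalSpace G₀]
    [ContinuousMul G₀] {c : G₀} (hc : c ≠ 0) :
    map (· * c) (𝓝[≠] (0 : G₀)) = 𝓝[≠] 0 := by
  simpa using (Homeomorph.mulRight₀ c hc).map_punctured_nhds_eq 0

theorem hasDerivAt_iff_tendsto_slope_mul_zero {𝕜 F : Type*} [NontriviallyNormedField 𝕜]
    [NormedAddCommGroup F] [NormedSpace 𝕜 F] {f : 𝕜 → F} {f' : F} {x c : 𝕜} (hc : c ≠ 0) :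
    HasDerivAt f f' x ↔
      Tendsto (fun θ ↦ θ⁻¹ • (f (x + θ * c) - f x)) (𝓝[≠] 0) (𝓝 (c • f')) := by
  rw [hasDerivAt_iff_tendsto_slope_zero]
  conv_lhs => rw [← map_mul_right_nhdsNE_zero hc, tendsto_map'_iff, ← tendsto_const_smul_iff₀ hc]
  refine tendsto_congr fun θ ↦ ?_
  simp only [Function.comp_apply, mul_inv, smul_smul]
  rw [mul_left_comm, mul_inv_cancel₀ hc, mul_one]

theorem hasConfDerivAt_iff_hasDerivAt {a α t f' : ℝ} {f : ℝ → ℝ} (ht : a < t) :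
    HasConfDerivAt a α f t ((t - a) ^ (1 - α) * f') ↔ HasDerivAt f f' t := by
  rw [hasDerivAt_iff_tendsto_slope_mul_zero (Real.rpow_pos_of_pos (sub_pos.2 ht) (1 - α)).ne']
  simp only [HasConfDerivAt, smul_eq_mul, div_eq_inv_mul]

theorem conf_deriv_iff_hasDerivAt_general (a α t₀ : ℝ) (f : ℝ → ℝ)
    (ht₀ : t₀ ∈ Set.Ioi a) :
    ((∃ L, HasConfDerivAt a α f t₀ L) ↔ ∃ f', HasDerivAt f f' t₀) ∧
      (∀ f', HasDerivAt f f' t₀ →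
        HasConfDerivAt a α f t₀ ((t₀ - a) ^ (1 - α) * f')) := by
  have hc : (t₀ - a) ^ (1 - α) ≠ 0 := (Real.rpow_pos_of_pos (sub_pos.2 ht₀) _).ne'
  refine ⟨⟨fun ⟨L, hL⟩ ↦ ⟨L / (t₀ - a) ^ (1 - α), ?_⟩,
    fun ⟨f', hf'⟩ ↦ ⟨_, (hasConfDerivAt_iff_hasDerivAt ht₀).2 hf'⟩⟩,
    fun _ ↦ (hasConfDerivAt_iff_hasDerivAt ht₀).2⟩
  rwa [← hasConfDerivAt_iff_hasDerivAt ht₀, mul_div_cancel₀ _ hc]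

theorem conf_deriv_iff_hasDerivAt (a α t₀ : ℝ) (f : ℝ → ℝ)
    (hα : α ∈ Set.Ioo (0:ℝ) 1) (ht₀ : t₀ ∈ Set.Ioi a) :
    ((∃ L, HasConfDerivAt a α f t₀ L) ↔ ∃ f', HasDerivAt f f' t₀) ∧
      (∀ f', HasDerivAt f f' t₀ →
        HasConfDerivAt a α f t₀ ((t₀ - a) ^ (1 - α) * f')) :=
  conf_deriv_iff_hasDerivAt_general a α t₀ f ht₀
end

section
/- Let f : [a,∞) → ℝ be continuous on [a,∞) and α ∈ (0,1]. Then for every t₀ ∈ (a,∞), T_a^α (I_a^α f)(t₀) = f(t₀), i.e., the conformable derivative is a left inverse of the conformable integral on continuous functions. -/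
open Filter Topology Set

/-!
Where `F` is differentiable, its conformable derivative is `(t - a) ^ (1 - α) * F' t`: the
difference quotient is the ordinary one along the line `θ ↦ t + θ * (t - a) ^ (1 - α)`. By the
fundamental theorem of calculus `(confInt a α f)' t = (t - a) ^ (α - 1) * f t` for `t > a`, and
the two powers cancel.
-/

open MeasureTheory

theorem HasDerivAt.hasConfDerivAt {f : ℝ → ℝ} {f' t : ℝ} (hf : HasDerivAt f f' t) (a α : ℝ) :
    HasConfDerivAt a α f t ((t - a) ^ (1 - α) * f') := by
  set c := (t - a) ^ (1 - α)
  have hline : HasDerivAt (fun θ : ℝ => t + θ * c) c 0 := by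
    simpa using ((hasDerivAt_id (0 : ℝ)).mul_const c).const_add t
  have hcomp : HasDerivAt (fun θ => f (t + θ * c)) (f' * c) 0 :=
    hf.comp_of_eq 0 hline (by simp)
  rw [hasDerivAt_iff_tendsto_slope_zero] at hcomp
  rw [mul_comm]
  refine hcomp.congr fun θ => ?_
  simp [c, div_eq_inv_mul]

theorem intervalIntegrable_rpow_sub_mul {f : ℝ → ℝ} {a b α : ℝ} (hα : 0 < α) (hab : a ≤ b)
    (hf : ContinuousOn f (Icc a b)) :
    IntervalIntegrable (fun s => (s - a) ^ (α - 1) * f s) volume a b := by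
  have hpow : IntervalIntegrable (fun s : ℝ => (s - a) ^ (α - 1)) volume a b := by
    simpa using (intervalIntegral.intervalIntegrable_rpow' (a := 0) (b := b - a)
      (r := α - 1) (by linarith)).comp_sub_right a
  exact hpow.mul_continuousOn (by rwa [uIcc_of_le hab])

theorem hasDerivAt_confInt {f : ℝ → ℝ} {a α t : ℝ} (hα : 0 < α) (hf : ContinuousOn f (Ici a))
    (ht : a < t) : HasDerivAt (confInt a α f) ((t - a) ^ (α - 1) * f t) t := by
  have hg : ContinuousOn (fun s => (s - a) ^ (α - 1) * f s) (Ioi a) :=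
    ((continuousOn_id.sub continuousOn_const).rpow_const fun s hs =>
      Or.inl (sub_ne_zero.2 (ne_of_gt hs))).mul (hf.mono Ioi_subset_Ici_self)
  exact intervalIntegral.integral_hasDerivAt_right
    (intervalIntegrable_rpow_sub_mul hα ht.le (hf.mono Icc_subset_Ici_self))
    (hg.stronglyMeasurableAtFilter isOpen_Ioi t ht) (hg.continuousAt (Ioi_mem_nhds ht))

theorem conf_deriv_conf_int (a α : ℝ) (f : ℝ → ℝ)
    (hα : α ∈ Set.Ioc (0:ℝ) 1) (hf : ContinuousOn f (Set.Ici a)) :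
    ∀ t₀ ∈ Set.Ioi a, HasConfDerivAt a α (confInt a α f) t₀ (f t₀) := by
  intro t₀ ht₀
  have h := (hasDerivAt_confInt hα.1 hf ht₀).hasConfDerivAt a α
  rwa [← mul_assoc, ← Real.rpow_add (sub_pos.2 ht₀), sub_add_sub_cancel', sub_self,
    Real.rpow_zero, one_mul] at h
end

section
/- Let f : [a,∞) → ℝ, α ∈ (0,1], and suppose T_a^α f(a) := lim_{t→a+} T_a^α f(t) exists and is nonzero, with f α-differentiable on some (a, a+ε). Then for every β ∈ (α,1], the limit lim_{t→a+} T_a^β f(t) does not exist (as a finite limit). -/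
open Filter Topology Set

/-! Above the terminal the derivatives of different orders are rescalings of one another,
`T_a^β f(t) = (t - a)^(α - β) T_a^α f(t)`, and the factor `(t - a)^(β - α)` tends to `0` as
`t → a+`. So if `T_a^β f` had a finite limit at `a`, then `T_a^α f = (t - a)^(β - α) T_a^β f`
would tend to `0`, not to `L ≠ 0`. -/

theorem HasConfDerivAt.unique {a α : ℝ} {f : ℝ → ℝ} {t L L' : ℝ}
    (h : HasConfDerivAt a α f t L) (h' : HasConfDerivAt a α f t L') : L = L' :=
  tendsto_nhds_unique h h'

theorem tendsto_mul_const_nhdsNE_zero {c : ℝ} (hc : c ≠ 0) :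
    Tendsto (fun θ : ℝ => θ * c) (𝓝[≠] 0) (𝓝[≠] 0) := by
  refine tendsto_nhdsWithin_iff.mpr ⟨?_, ?_⟩
  · simpa using (continuous_mul_const c).tendsto' 0 0 (zero_mul c) |>.mono_left nhdsWithin_le_nhds
  · filter_upwards [self_mem_nhdsWithin] with θ (hθ : θ ≠ 0) using mul_ne_zero hθ hc

theorem HasConfDerivAt.change_order {a α : ℝ} {f : ℝ → ℝ} {t L : ℝ} (ht : a < t)
    (h : HasConfDerivAt a α f t L) (β : ℝ) :
    HasConfDerivAt a β f t ((t - a) ^ (α - β) * L) := by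
  have hta : 0 < t - a := sub_pos.mpr ht
  set c := (t - a) ^ (α - β)
  have hc : c ≠ 0 := (Real.rpow_pos_of_pos hta _).ne'
  -- the `β`-quotient at `θ` is `c` times the `α`-quotient at `θ * c`
  have hstep (θ : ℝ) : θ * (t - a) ^ (1 - β) = θ * c * (t - a) ^ (1 - α) := by
    rw [mul_assoc, ← Real.rpow_add hta]
    ring_nf
  refine ((h.comp (tendsto_mul_const_nhdsNE_zero hc)).const_mul c).congr' ?_
  filter_upwards [self_mem_nhdsWithin] with θ (hθ : θ ≠ 0)
  simp only [Function.comp_apply, hstep θ]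
  field_simp

theorem tendsto_sub_rpow_nhdsGT (a : ℝ) {p : ℝ} (hp : 0 < p) :
    Tendsto (fun t : ℝ => (t - a) ^ p) (𝓝[>] a) (𝓝 0) := by
  have hsub : Tendsto (fun t : ℝ => t - a) (𝓝[>] a) (𝓝 0) := by
    simpa using (continuous_sub_right a).tendsto' a 0 (sub_self a) |>.mono_left nhdsWithin_le_nhds
  simpa [Function.comp_def, Real.zero_rpow hp.ne'] using
    (Real.continuousAt_rpow_const 0 p (Or.inr hp.le)).tendsto.comp hsub

theorem conf_deriv_lower_terminal_not_exists_general (a α ε L : ℝ) (f T : ℝ → ℝ)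
    (hε : 0 < ε) (hL0 : L ≠ 0)
    (hT : ∀ t ∈ Set.Ioo a (a + ε), HasConfDerivAt a α f t (T t))
    (hL : Tendsto T (𝓝[>] a) (𝓝 L)) :
    ∀ β ∈ Set.Ioc α 1, ∀ S : ℝ → ℝ,
      (∀ t ∈ Set.Ioo a (a + ε), HasConfDerivAt a β f t (S t)) →
        ∀ M : ℝ, ¬ Tendsto S (𝓝[>] a) (𝓝 M) := by
  intro β hβ S hS M hM
  have hT_eq : ∀ᶠ t in 𝓝[>] a, (t - a) ^ (β - α) * S t = T t := by
    filter_upwards [Ioo_mem_nhdsGT (lt_add_of_pos_right a hε)] with t ht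
    have hta : 0 < t - a := sub_pos.mpr ht.1
    rw [(hS t ht).unique ((hT t ht).change_order ht.1 β), ← mul_assoc,
      ← Real.rpow_add hta, sub_add_sub_cancel, sub_self, Real.rpow_zero, one_mul]
  have hT_zero : Tendsto T (𝓝[>] a) (𝓝 0) := by
    simpa using ((tendsto_sub_rpow_nhdsGT a (sub_pos.mpr hβ.1)).mul hM).congr' hT_eq
  exact hL0 (tendsto_nhds_unique hL hT_zero)

theorem conf_deriv_lower_terminal_not_exists (a α ε L : ℝ) (f T : ℝ → ℝ)
    (hα : α ∈ Set.Ioc (0:ℝ) 1) (hε : 0 < ε) (hL0 : L ≠ 0)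
    (hT : ∀ t ∈ Set.Ioo a (a + ε), HasConfDerivAt a α f t (T t))
    (hL : Tendsto T (𝓝[>] a) (𝓝 L)) :
    ∀ β ∈ Set.Ioc α 1, ∀ S : ℝ → ℝ,
      (∀ t ∈ Set.Ioo a (a + ε), HasConfDerivAt a β f t (S t)) →
        ∀ M : ℝ, ¬ Tendsto S (𝓝[>] a) (𝓝 M) :=
  conf_deriv_lower_terminal_not_exists_general a α ε L f T hε hL0 hT hL
end

section
/- With the modified lower-terminal definition, for f : [a,∞) → ℝ, a point t₀ ∈ [a,∞), and α ∈ (0,1): the conformable derivative T_a^α f(t₀) exists if and only if f has a (right, if t₀=a) first derivative at t₀, and T_a^α f(t₀) = (t₀−a)^{1−α} f'(t₀). -/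
open Filter Topology Set

/-- Modified conformable derivative: at the lower terminal `a` it exists iff the
right derivative of `f` at `a` exists, with value `f'(a+)` when `α = 1` and `0`
when `α ∈ (0,1)`; away from `a` it is the usual conformable derivative. -/
def MHasConfDerivAt (a α : ℝ) (f : ℝ → ℝ) (t L : ℝ) : Prop :=
  if t = a then
    ∃ d : ℝ, HasDerivWithinAt f d (Set.Ici a) a ∧ L = (if α = 1 then d else 0)
  else HasConfDerivAt a α f t L

/-! For `t₀ > a` the factor `c = (t₀ - a) ^ (1 - α)` is positive, and the substitution
`h = θ * c` turns the conformable difference quotient into `c` times the ordinary one, so the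
two limits exist together and differ by the factor `c`. At `t₀ = a` the modified definition is
the right derivative itself, and `c = 0` because `1 - α ≠ 0`. -/

theorem hasDerivAt_iff_tendsto_dilated_slope {𝕜 : Type*} [NontriviallyNormedField 𝕜]
    {f : 𝕜 → 𝕜} {t c d : 𝕜} (hc : c ≠ 0) :
    HasDerivAt f d t ↔ Tendsto (fun θ => (f (t + θ * c) - f t) / θ) (𝓝[≠] 0) (𝓝 (c * d)) := by
  have hdilate : map (· * c) (𝓝[≠] 0) = 𝓝[≠] (0 : 𝕜) := by
    simpa using (Homeomorph.mulRight₀ c hc).map_punctured_nhds_eq 0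
  rw [hasDerivAt_iff_tendsto_slope_zero]
  conv_lhs => rw [← hdilate, tendsto_map'_iff, ← tendsto_const_smul_iff₀ hc]
  congr! 2 with θ
  simp only [Function.comp_apply, smul_eq_mul]
  field_simp

theorem hasConfDerivAt_mul_iff_hasDerivAt {a α t d : ℝ} {f : ℝ → ℝ} (hat : a < t) :
    HasConfDerivAt a α f t ((t - a) ^ (1 - α) * d) ↔ HasDerivAt f d t :=
  (hasDerivAt_iff_tendsto_dilated_slope (Real.rpow_pos_of_pos (sub_pos.2 hat) _).ne').symm

theorem exists_hasConfDerivAt_iff {a α t : ℝ} {f : ℝ → ℝ} (hat : a < t) :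
    (∃ L, HasConfDerivAt a α f t L) ↔ ∃ d, HasDerivAt f d t := by
  have hc : (t - a) ^ (1 - α) ≠ 0 := (Real.rpow_pos_of_pos (sub_pos.2 hat) _).ne'
  refine ⟨fun ⟨L, hL⟩ => ⟨L / (t - a) ^ (1 - α), ?_⟩,
    fun ⟨d, hd⟩ => ⟨_, (hasConfDerivAt_mul_iff_hasDerivAt hat).2 hd⟩⟩
  rwa [← hasConfDerivAt_mul_iff_hasDerivAt hat, mul_div_cancel₀ _ hc]

theorem mHasConfDerivAt_self_iff {a α L : ℝ} {f : ℝ → ℝ} (hα : α ≠ 1) :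
    MHasConfDerivAt a α f a L ↔ (∃ d, HasDerivWithinAt f d (Ici a) a) ∧ L = 0 := by
  simp [MHasConfDerivAt, hα]

theorem mconf_deriv_iff_deriv (a α t₀ : ℝ) (f : ℝ → ℝ)
    (hα : α ∈ Set.Ioo (0:ℝ) 1) (ht₀ : t₀ ∈ Set.Ici a) :
    ((∃ L, MHasConfDerivAt a α f t₀ L) ↔ ∃ d, HasDerivWithinAt f d (Set.Ici a) t₀) ∧
      (∀ d, HasDerivWithinAt f d (Set.Ici a) t₀ →
        MHasConfDerivAt a α f t₀ ((t₀ - a) ^ (1 - α) * d)) := by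
  rcases (mem_Ici.1 ht₀).eq_or_lt with rfl | hat
  · have hc : (a - a) ^ (1 - α) = 0 := by
      rw [sub_self, Real.zero_rpow (sub_ne_zero.2 hα.2.ne')]
    refine ⟨by simp [mHasConfDerivAt_self_iff hα.2.ne], fun d hd => ?_⟩
    exact (mHasConfDerivAt_self_iff hα.2.ne).2 ⟨⟨d, hd⟩, by rw [hc, zero_mul]⟩
  · have hwithin : ∀ d, HasDerivWithinAt f d (Ici a) t₀ ↔ HasDerivAt f d t₀ :=
      fun d => ⟨(·.hasDerivAt (Ici_mem_nhds hat)), (·.hasDerivWithinAt)⟩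
    simp only [MHasConfDerivAt, if_neg hat.ne', hwithin]
    exact ⟨exists_hasConfDerivAt_iff hat, fun d => (hasConfDerivAt_mul_iff_hasDerivAt hat).2⟩
end
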